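/- arXiv:math/0002185 — 4 statements merged into one kernel-verified Lean document; each statement's English description precedes it below -/
import Mathlib

section
/- Let G be a countable group, E ⊆ G finite, ε > 0, and let u be a positive definite kernel on G with u(s,s) = 1 for all s and |1 − u(s,t)| < ε whenever s t⁻¹ ∈ E. Let ξ_s ∈ ℓ²(G) satisfy ⟨ξ_t, ξ_s⟩ = u(s,t), and set μ_s(t) = |ξ_s(t⁻¹ s)|². Then for every s ∈ E and t ∈ G, ‖s·μ_t − μ_{st}‖₁ ≤ 2√(2ε), where (s·μ_t)(r) = μ_t(s⁻¹ r). -/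
/-!
Substituting `r = s t q⁻¹` turns the sum into `∑ q, | |ξ_t q|² - |ξ_{st} q|² |`. Pointwise
`|a² - b²| ≤ |a - b| (|a| + |b|)`, so Cauchy–Schwarz bounds the sum by
`‖ξ_t - ξ_{st}‖ (‖ξ_t‖ + ‖ξ_{st}‖) = 2 ‖ξ_t - ξ_{st}‖`, and for unit vectors
`‖ξ_t - ξ_{st}‖² = 2 - 2 Re ⟨ξ_t, ξ_{st}⟩ ≤ 2 ‖1 - u(st, t)‖ < 2ε`.
-/

open scoped ComplexOrder

/-- `u` is a positive definite kernel: every finite matrix `[u (s i) (s j)]` is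
positive semidefinite. -/
def IsPosDefKernel {G : Type*} (u : G → G → ℂ) : Prop :=
  ∀ (n : ℕ) (s : Fin n → G), (Matrix.of fun i j => u (s i) (s j)).PosSemidef

open scoped ENNReal

theorem abs_sq_norm_sub_sq_norm_le {E : Type*} [SeminormedAddCommGroup E] (a b : E) :
    |‖a‖ ^ 2 - ‖b‖ ^ 2| ≤ ‖a - b‖ * (‖a‖ + ‖b‖) := by
  rw [sq_sub_sq, abs_mul, abs_of_nonneg (by positivity : 0 ≤ ‖a‖ + ‖b‖), mul_comm]
  gcongr
  exact abs_norm_sub_norm_le a b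

namespace lp

variable {α : Type*} {E : α → Type*} [∀ i, NormedAddCommGroup (E i)]

theorem tsum_abs_sq_norm_sub_sq_norm_le (f g : lp E 2) :
    ∑' i, |‖f i‖ ^ 2 - ‖g i‖ ^ 2| ≤ ‖f - g‖ * (‖f‖ + ‖g‖) := by
  have h22 : (2 : ℝ≥0∞).toReal.HolderConjugate (2 : ℝ≥0∞).toReal := by
    simpa using Real.HolderConjugate.two_two
  have hf := lp.tsum_mul_le_mul_norm h22 (f - g) f
  have hg := lp.tsum_mul_le_mul_norm h22 (f - g) g
  have hbound : ∀ i, |‖f i‖ ^ 2 - ‖g i‖ ^ 2| ≤ ‖(f - g) i‖ * ‖f i‖ + ‖(f - g) i‖ * ‖g i‖ := by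
    intro i
    rw [← mul_add, coeFn_sub, Pi.sub_apply]
    exact abs_sq_norm_sub_sq_norm_le (f i) (g i)
  have hsum := hf.1.add hg.1
  calc ∑' i, |‖f i‖ ^ 2 - ‖g i‖ ^ 2|
      ≤ ∑' i, (‖(f - g) i‖ * ‖f i‖ + ‖(f - g) i‖ * ‖g i‖) :=
        (hsum.of_nonneg_of_le (fun _ => abs_nonneg _) hbound).tsum_le_tsum hbound hsum
    _ = ∑' i, ‖(f - g) i‖ * ‖f i‖ + ∑' i, ‖(f - g) i‖ * ‖g i‖ := hf.1.tsum_add hg.1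
    _ ≤ ‖f - g‖ * ‖f‖ + ‖f - g‖ * ‖g‖ := add_le_add hf.2 hg.2
    _ = ‖f - g‖ * (‖f‖ + ‖g‖) := (mul_add _ _ _).symm

end lp

section InnerProductSpace

variable {𝕜 F : Type*} [RCLike 𝕜] [NormedAddCommGroup F] [InnerProductSpace 𝕜 F]

theorem norm_eq_one_of_inner_self_eq_one {x : F} (hx : inner 𝕜 x x = (1 : 𝕜)) : ‖x‖ = 1 := by
  rw [norm_eq_sqrt_re_inner (𝕜 := 𝕜), hx]
  simp

theorem norm_sub_sq_le_of_norm_eq_one {x y : F} (hx : ‖x‖ = 1) (hy : ‖y‖ = 1) {ε : ℝ}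
    (h : ‖1 - inner 𝕜 x y‖ ≤ ε) : ‖x - y‖ ^ 2 ≤ 2 * ε := by
  have hre : 1 - RCLike.re (inner 𝕜 x y) ≤ ε := by
    simpa using (RCLike.re_le_norm (1 - inner 𝕜 x y)).trans h
  rw [norm_sub_sq (𝕜 := 𝕜), hx, hy]
  linarith

end InnerProductSpace

theorem tsum_comp_mul_inv {G R : Type*} [Group G] [AddCommMonoid R] [TopologicalSpace R]
    (g : G) (F : G → R) : ∑' q, F (g * q⁻¹) = ∑' r, F r :=
  ((Equiv.inv G).trans (Equiv.mulLeft g)).tsum_eq F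

theorem mu_almost_invariant_general {G : Type*} [Group G]
    (E : Finset G) (ε : ℝ)
    (u : G → G → ℂ) (hdiag : ∀ s : G, u s s = 1)
    (hE : ∀ s t : G, s * t⁻¹ ∈ E → ‖1 - u s t‖ < ε)
    (ξ : G → lp (fun _ : G => ℂ) 2)
    (hgram : ∀ s t : G, (inner ℂ (ξ t) (ξ s) : ℂ) = u s t)
    (μ : G → G → ℝ) (hμ : ∀ s t : G, μ s t = ‖ξ s (t⁻¹ * s)‖ ^ 2) :
    ∀ s ∈ E, ∀ t : G,
      (∑' r : G, |μ t (s⁻¹ * r) - μ (s * t) r|) ≤ 2 * Real.sqrt (2 * ε) := by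
  intro s hs t
  have hunit (r : G) : ‖ξ r‖ = 1 :=
    norm_eq_one_of_inner_self_eq_one (𝕜 := ℂ) (by rw [hgram, hdiag])
  have hnear : ‖1 - inner ℂ (ξ t) (ξ (s * t))‖ ≤ ε := by
    rw [hgram]
    exact (hE (s * t) t (by simpa using hs)).le
  have hclose : ‖ξ t - ξ (s * t)‖ ≤ Real.sqrt (2 * ε) :=
    Real.le_sqrt_of_sq_le (norm_sub_sq_le_of_norm_eq_one (hunit t) (hunit (s * t)) hnear)
  have hreindex : ∑' r, |μ t (s⁻¹ * r) - μ (s * t) r|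
      = ∑' q, |‖ξ t q‖ ^ 2 - ‖ξ (s * t) q‖ ^ 2| := by
    rw [← tsum_comp_mul_inv (s * t)]
    congr! 3 with q
    simp only [hμ]
    group
  calc ∑' r, |μ t (s⁻¹ * r) - μ (s * t) r|
      = ∑' q, |‖ξ t q‖ ^ 2 - ‖ξ (s * t) q‖ ^ 2| := hreindex
    _ ≤ ‖ξ t - ξ (s * t)‖ * (‖ξ t‖ + ‖ξ (s * t)‖) := lp.tsum_abs_sq_norm_sub_sq_norm_le _ _
    _ ≤ 2 * Real.sqrt (2 * ε) := by rw [hunit, hunit]; linarith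

theorem mu_almost_invariant {G : Type*} [Group G] [Countable G]
    (E : Finset G) (ε : ℝ) (hε : 0 < ε)
    (u : G → G → ℂ) (hu : IsPosDefKernel u) (hdiag : ∀ s : G, u s s = 1)
    (hE : ∀ s t : G, s * t⁻¹ ∈ E → ‖1 - u s t‖ < ε)
    (ξ : G → lp (fun _ : G => ℂ) 2)
    (hgram : ∀ s t : G, (inner ℂ (ξ t) (ξ s) : ℂ) = u s t)
    (μ : G → G → ℝ) (hμ : ∀ s t : G, μ s t = ‖ξ s (t⁻¹ * s)‖ ^ 2) :
    ∀ s ∈ E, ∀ t : G,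
      (∑' r : G, |μ t (s⁻¹ * r) - μ (s * t) r|) ≤ 2 * Real.sqrt (2 * ε) :=
  mu_almost_invariant_general E ε u hdiag hE ξ hgram μ hμ
end

section
/- Let B be a C*-algebra and n ∈ ℕ. The map sending a completely positive map φ : B → Mₙ(ℂ) to the linear functional f_φ on Mₙ(B) defined by f_φ([x_{ij}]) = Σ_{i,j} φ(x_{ij})_{ij} is a bijection between the set of completely positive maps B → Mₙ(ℂ) and the set of positive linear functionals on Mₙ(B). -/
open scoped ComplexOrder

/-! If `φ` is completely positive, `f_φ(X* X)` is the sum of all entries of the submatrix of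
the positive block matrix `[φ((X* X)ᵢⱼ)]` on the diagonal indices `(i, i)`, hence nonnegative.
Conversely, `f` forces `φ(b)ᵢⱼ = f(b ⊗ eᵢⱼ)`, and for `M = Y* Y` the block matrix
`[φ(M_{rs})_{ac}]` is a sum, over the rows of `Y`, of Gram matrices of the positive
sesquilinear form `(u, v) ↦ f(u* v)` on `Mₙ(B)`. -/

/-- An element of a C*-algebra is positive iff it is of the form `b* b`. -/
def IsPosElem {A : Type*} [Mul A] [Star A] (a : A) : Prop :=
  ∃ b : A, a = star b * b

/-- A map `φ : B → Mₙ(ℂ)` is completely positive: for every `k`, the amplification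
`φ ⊗ id_{M_k}` sends positive matrices over `B` to positive semidefinite matrices. -/
def IsCompletelyPositive {B : Type*} [NonUnitalCStarAlgebra B] {n : ℕ}
    (φ : B → Matrix (Fin n) (Fin n) ℂ) : Prop :=
  IsLinearMap ℂ φ ∧
    ∀ (k : ℕ) (M : Matrix (Fin k) (Fin k) B), IsPosElem M →
      (Matrix.of fun p q : Fin k × Fin n => (φ (M p.1 q.1)) p.2 q.2).PosSemidef

/-- A positive linear functional on `Mₙ(B)`. -/
def IsPosFunctional {B : Type*} [NonUnitalCStarAlgebra B] {n : ℕ}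
    (f : Matrix (Fin n) (Fin n) B → ℂ) : Prop :=
  IsLinearMap ℂ f ∧ ∀ X : Matrix (Fin n) (Fin n) B, 0 ≤ f (star X * X)

namespace Matrix

variable {ι : Type*} [Fintype ι]

theorem posSemidef_of_forall_dotProduct_mulVec_nonneg {A : Matrix ι ι ℂ}
    (hA : ∀ v, 0 ≤ star v ⬝ᵥ A *ᵥ v) : A.PosSemidef := by
  classical
  refine .of_dotProduct_mulVec_nonneg ?_ hA
  rw [← isSymmetric_toEuclideanLin_iff, LinearMap.isSymmetric_iff_inner_map_self_real]
  intro v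
  have hreal : IsSelfAdjoint (A *ᵥ v.ofLp ⬝ᵥ star v.ofLp) := by
    simpa [dotProduct_comm] using (hA v.ofLp).isSelfAdjoint
  rw [EuclideanSpace.inner_eq_star_dotProduct, ofLp_toLpLin, toLin'_apply, dotProduct_star,
    hreal.star_eq]
  exact hreal.star_eq

theorem PosSemidef.sum_apply_nonneg {R : Type*} [CommRing R] [PartialOrder R] [StarRing R]
    {A : Matrix ι ι R} (hA : A.PosSemidef) : 0 ≤ ∑ i, ∑ j, A i j := by
  simpa [dotProduct, mulVec, Finset.mul_sum] using hA.dotProduct_mulVec_nonneg 1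

omit [Fintype ι] in
theorem PosSemidef.of_isEmpty {R : Type*} [CommRing R] [PartialOrder R] [StarRing R]
    [IsEmpty ι] (A : Matrix ι ι R) : A.PosSemidef := by
  rw [show A = 0 from ext fun p => isEmptyElim p]
  exact .zero

end Matrix

open Matrix

theorem posSemidef_gram_of_map_star_mul_self_nonneg {A : Type*} [NonUnitalNonAssocSemiring A]
    [StarRing A] [Module ℂ A] [SMulCommClass ℂ A A] [IsScalarTower ℂ A A] [StarModule ℂ A]
    (f : A →ₗ[ℂ] ℂ) (hf : ∀ x, 0 ≤ f (star x * x)) {ι : Type*} [Fintype ι] (v : ι → A) :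
    (of fun p q => f (star (v p) * v q)).PosSemidef := by
  refine posSemidef_of_forall_dotProduct_mulVec_nonneg fun c => ?_
  convert hf (∑ q, c q • v q) using 1
  simp only [dotProduct, mulVec, of_apply, Pi.star_apply, star_sum, star_smul, Finset.sum_mul,
    Finset.mul_sum, smul_mul_smul_comm, map_sum, map_smul, smul_eq_mul]
  conv_rhs => rw [Finset.sum_comm]
  refine Finset.sum_congr rfl fun p _ => Finset.sum_congr rfl fun q _ => ?_
  rw [RCLike.star_def]
  ring

theorem IsCompletelyPositive.isPosFunctional_sum_apply {B : Type*} [NonUnitalCStarAlgebra B]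
    {n : ℕ} {φ : B → Matrix (Fin n) (Fin n) ℂ} (hφ : IsCompletelyPositive φ) :
    IsPosFunctional fun X : Matrix (Fin n) (Fin n) B => ∑ i, ∑ j, φ (X i j) i j := by
  refine ⟨⟨fun X Y => ?_, fun c X => ?_⟩, fun X => ?_⟩
  · simp only [Matrix.add_apply, hφ.1.map_add, Finset.sum_add_distrib]
  · simp only [Matrix.smul_apply, hφ.1.map_smul, smul_eq_mul, Finset.mul_sum]
  · let diag : Fin n → Fin n × Fin n := fun i => (i, i)
    exact ((hφ.2 n (star X * X) ⟨X, rfl⟩).submatrix diag).sum_apply_nonneg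

section cpMapOfFunctional

variable {m α : Type*} [DecidableEq m]

def cpMapOfFunctional [Zero α] (f : Matrix m m α → ℂ) (b : α) : Matrix m m ℂ :=
  of fun i j => f (single i j b)

theorem eq_cpMapOfFunctional [Fintype m] [Zero α] {f : Matrix m m α → ℂ}
    {φ : α → Matrix m m ℂ} (hφ : φ 0 = 0) (hf : ∀ X, f X = ∑ i, ∑ j, φ (X i j) i j) :
    φ = cpMapOfFunctional f := by
  funext b
  ext i j
  simp [cpMapOfFunctional, hf, single_apply, apply_ite φ, hφ, Matrix.ite_apply, ite_and,
    Finset.sum_ite_irrel]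

variable [AddCommMonoid α] [Module ℂ α] {f : Matrix m m α → ℂ}

theorem isLinearMap_cpMapOfFunctional (hf : IsLinearMap ℂ f) :
    IsLinearMap ℂ (cpMapOfFunctional f) :=
  ⟨fun a b => ext fun i j => by simp [cpMapOfFunctional, single_add, hf.map_add],
    fun c b => ext fun i j => by simp [cpMapOfFunctional, ← smul_single, hf.map_smul]⟩

theorem eq_sum_cpMapOfFunctional [Fintype m] (hf : IsLinearMap ℂ f) (X : Matrix m m α) :
    f X = ∑ i, ∑ j, cpMapOfFunctional f (X i j) i j := by
  let F := IsLinearMap.mk' f hf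
  conv_lhs => rw [matrix_eq_sum_single X]
  exact (map_sum F _ _).trans (Finset.sum_congr rfl fun i _ => map_sum F _ _)

end cpMapOfFunctional

theorem IsPosFunctional.isCompletelyPositive_cpMapOfFunctional {B : Type*}
    [NonUnitalCStarAlgebra B] {n : ℕ} {f : Matrix (Fin n) (Fin n) B → ℂ}
    (hf : IsPosFunctional f) : IsCompletelyPositive (cpMapOfFunctional f) := by
  refine ⟨isLinearMap_cpMapOfFunctional hf.1, ?_⟩
  rintro k _ ⟨Y, rfl⟩
  rcases isEmpty_or_nonempty (Fin n) with _ | ⟨⟨i₀⟩⟩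
  · exact .of_isEmpty _
  let F := IsLinearMap.mk' f hf.1
  -- `(Y* Y)ᵣₛ ⊗ e_{ac} = Σₜ (Yₜᵣ ⊗ e_{i₀ a})* (Yₜₛ ⊗ e_{i₀ c})`, a sum of Gram matrices
  have hblock : (of fun p q : Fin k × Fin n => cpMapOfFunctional f ((star Y * Y) p.1 q.1) p.2 q.2)
      = ∑ t, of fun p q : Fin k × Fin n =>
          F (star (single i₀ p.2 (Y t p.1)) * single i₀ q.2 (Y t q.1)) := by
    ext p q
    simp only [cpMapOfFunctional, of_apply, Matrix.sum_apply, mul_apply, conjTranspose_apply,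
      star_eq_conjTranspose, conjTranspose_single, single_mul_single_same]
    exact map_sum (F ∘ₗ singleLinearMap ℂ p.2 q.2) _ _
  rw [hblock]
  exact posSemidef_sum _ fun t _ => posSemidef_gram_of_map_star_mul_self_nonneg F hf.2 _

/-- The correspondence `φ ↦ f_φ`, `f_φ([x_{ij}]) = Σ_{i,j} φ(x_{ij})_{ij}`, is a
bijection between completely positive maps `B → Mₙ(ℂ)` and positive linear
functionals on `Mₙ(B)`. -/
theorem cp_posFunctional_correspondence {B : Type*} [NonUnitalCStarAlgebra B] (n : ℕ) :
    (∀ φ : B → Matrix (Fin n) (Fin n) ℂ, IsCompletelyPositive φ →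
      IsPosFunctional (fun X : Matrix (Fin n) (Fin n) B =>
        ∑ i : Fin n, ∑ j : Fin n, (φ (X i j)) i j)) ∧
    (∀ f : Matrix (Fin n) (Fin n) B → ℂ, IsPosFunctional f →
      ∃! φ : B → Matrix (Fin n) (Fin n) ℂ, IsCompletelyPositive φ ∧
        ∀ X : Matrix (Fin n) (Fin n) B,
          f X = ∑ i : Fin n, ∑ j : Fin n, (φ (X i j)) i j) := by
  refine ⟨fun φ hφ => hφ.isPosFunctional_sum_apply, fun f hf => ?_⟩
  refine ⟨cpMapOfFunctional f,
    ⟨hf.isCompletelyPositive_cpMapOfFunctional, eq_sum_cpMapOfFunctional hf.1⟩, ?_⟩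
  rintro φ ⟨hφ, hsum⟩
  exact eq_cpMapOfFunctional hφ.1.map_zero hsum
end

section
/- Condition (ii) of the main theorem implies uniform embeddability: if for every finite E ⊆ G and ε > 0 there exist a finite F ⊆ G and a positive definite kernel u with u(s,s) = 1 for all s, u(s,t) = 0 unless s t⁻¹ ∈ F, and |1 − u(s,t)| < ε whenever s t⁻¹ ∈ E, then for each such u the Gram vectors ξ_s (with ⟨ξ_t, ξ_s⟩ = u(s,t)) satisfy: ‖ξ_s − ξ_t‖² < 2ε whenever s t⁻¹ ∈ E, and ‖ξ_s − ξ_t‖² = 2 whenever s t⁻¹ ∉ F. -/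
open scoped ComplexOrder InnerProductSpace

section UnitVectors

variable {𝕜 H : Type*} [RCLike 𝕜] [NormedAddCommGroup H] [InnerProductSpace 𝕜 H]

theorem norm_eq_one_of_inner_self_eq_one_s13 {x : H} (h : ⟪x, x⟫_𝕜 = 1) : ‖x‖ = 1 := by
  have hsq : ‖x‖ ^ 2 = 1 := by
    rw [← inner_self_eq_norm_sq (𝕜 := 𝕜), h, RCLike.one_re]
  exact (pow_eq_one_iff_of_nonneg (norm_nonneg x) two_ne_zero).mp hsq

theorem norm_sub_sq_eq_two_sub_two_re_inner_of_norm_eq_one {x y : H}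
    (hx : ‖x‖ = 1) (hy : ‖y‖ = 1) :
    ‖x - y‖ ^ 2 = 2 - 2 * RCLike.re ⟪y, x⟫_𝕜 := by
  rw [@norm_sub_sq 𝕜, hx, hy, inner_re_symm]
  ring

end UnitVectors

theorem condition_ii_uniform_embedding_general {G : Type*} [Group G]
    (E F : Finset G) (ε : ℝ)
    (u : G → G → ℂ) (hdiag : ∀ s : G, u s s = 1)
    (hsupp : ∀ s t : G, s * t⁻¹ ∉ F → u s t = 0)
    (hE : ∀ s t : G, s * t⁻¹ ∈ E → ‖1 - u s t‖ < ε)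
    {H : Type*} [NormedAddCommGroup H] [InnerProductSpace ℂ H]
    (ξ : G → H) (hgram : ∀ s t : G, (inner ℂ (ξ t) (ξ s) : ℂ) = u s t) :
    (∀ s t : G, s * t⁻¹ ∈ E → ‖ξ s - ξ t‖ ^ 2 < 2 * ε) ∧
    ∀ s t : G, s * t⁻¹ ∉ F → ‖ξ s - ξ t‖ ^ 2 = 2 := by
  have hunit (s : G) : ‖ξ s‖ = 1 :=
    norm_eq_one_of_inner_self_eq_one_s13 ((hgram s s).trans (hdiag s))
  have hdist (s t : G) : ‖ξ s - ξ t‖ ^ 2 = 2 - 2 * (u s t).re := by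
    rw [norm_sub_sq_eq_two_sub_two_re_inner_of_norm_eq_one (𝕜 := ℂ) (hunit s) (hunit t),
      hgram, RCLike.re_eq_complex_re]
  refine ⟨fun s t hst => ?_, fun s t hst => ?_⟩
  · have hre : 1 - (u s t).re < ε := by
      simpa using (Complex.re_le_norm (1 - u s t)).trans_lt (hE s t hst)
    rw [hdist]
    linarith
  · rw [hdist, hsupp s t hst, Complex.zero_re]
    ring

/-- Condition (ii) of the main theorem yields a uniform embedding: the Gram vectors
of such a kernel satisfy `‖ξ_s - ξ_t‖² < 2ε` when `s t⁻¹ ∈ E` and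
`‖ξ_s - ξ_t‖² = 2` when `s t⁻¹ ∉ F`. -/
theorem condition_ii_uniform_embedding {G : Type*} [Group G] [Countable G]
    (E F : Finset G) (ε : ℝ) (hε : 0 < ε)
    (u : G → G → ℂ) (hu : IsPosDefKernel u) (hdiag : ∀ s : G, u s s = 1)
    (hsupp : ∀ s t : G, s * t⁻¹ ∉ F → u s t = 0)
    (hE : ∀ s t : G, s * t⁻¹ ∈ E → ‖1 - u s t‖ < ε)
    {H : Type*} [NormedAddCommGroup H] [InnerProductSpace ℂ H]
    (ξ : G → H) (hgram : ∀ s t : G, (inner ℂ (ξ t) (ξ s) : ℂ) = u s t) :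
    (∀ s t : G, s * t⁻¹ ∈ E → ‖ξ s - ξ t‖ ^ 2 < 2 * ε) ∧
    ∀ s t : G, s * t⁻¹ ∉ F → ‖ξ s - ξ t‖ ^ 2 = 2 :=
  condition_ii_uniform_embedding_general E F ε u hdiag hsupp hE ξ hgram
end

section
/- Let x ∈ B(ℓ²(G)) be an operator whose matrix is supported in the tube {(s,t) : s t⁻¹ ∈ F} for a finite subset F ⊆ G. Then x = Σ_{r ∈ F} λ(r) M_{f_r} for functions f_r ∈ ℓ^∞(G) given by f_r(t) = x_{rt, t}, and ‖f_r‖_∞ ≤ ‖x‖. -/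
open scoped ComplexOrder ENNReal

/-!
Expanding `ξ = ∑ₜ ξ(t) δₜ` gives `(x ξ)(s) = ∑ₜ x_{s,t} ξ(t)`. The tube condition leaves only the
terms `t = r⁻¹ s` with `r ∈ F`, and the term for `r` is `(λ(r) M_{f_r} ξ)(s)`. Each `f_r(t)` is a
coordinate of `x δₜ`, hence bounded by `‖x‖`, so `M_{f_r}` is a bounded multiplication operator.
-/

namespace lp

variable {ι 𝕜 : Type*} [RCLike 𝕜] [DecidableEq ι] {p q : ℝ≥0∞} [Fact (1 ≤ p)] [Fact (1 ≤ q)]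

theorem inner_single_one_left (i : ι) (f : lp (fun _ : ι => 𝕜) 2) :
    (inner 𝕜 (lp.single 2 i (1 : 𝕜)) f : 𝕜) = f i := by
  simp [lp.inner_single_left]

theorem norm_apply_single_one_le (x : lp (fun _ : ι => 𝕜) p →L[𝕜] lp (fun _ : ι => 𝕜) q)
    (s t : ι) : ‖x (lp.single p t 1) s‖ ≤ ‖x‖ :=
  calc ‖x (lp.single p t 1) s‖ ≤ ‖x (lp.single p t 1)‖ :=
        norm_apply_le_norm (zero_lt_one.trans_le Fact.out).ne' _ s
    _ ≤ ‖x‖ * ‖(lp.single p t 1 : lp (fun _ : ι => 𝕜) p)‖ := x.le_opNorm _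
    _ = ‖x‖ := by rw [lp.norm_single (zero_lt_one.trans_le Fact.out), norm_one, mul_one]

theorem hasSum_apply_single_one_mul (hp : p ≠ ⊤)
    (x : lp (fun _ : ι => 𝕜) p →L[𝕜] lp (fun _ : ι => 𝕜) q) (ξ : lp (fun _ : ι => 𝕜) p) (s : ι) :
    HasSum (fun t => x (lp.single p t 1) s * ξ t) (x ξ s) := by
  set y := (evalCLM 𝕜 (fun _ : ι => 𝕜) q s).comp x
  have hy (t : ι) : y (lp.single p t (ξ t)) = x (lp.single p t 1) s * ξ t :=
    calc y (lp.single p t (ξ t)) = y (ξ t • lp.single p t 1) := by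
          rw [← lp.single_smul, smul_eq_mul, mul_one]
      _ = ξ t * y (lp.single p t 1) := y.map_smul _ _
      _ = x (lp.single p t 1) s * ξ t := mul_comm _ _
  have h := y.hasSum (lp.hasSum_single hp ξ)
  simp only [hy] at h
  exact h

theorem apply_eq_sum_of_tube_support {G : Type*} [Group G] [DecidableEq G] (hp : p ≠ ⊤)
    {F : Finset G} {x : lp (fun _ : G => 𝕜) p →L[𝕜] lp (fun _ : G => 𝕜) q}
    (hx : ∀ s t, s * t⁻¹ ∉ F → x (lp.single p t 1) s = 0) (ξ : lp (fun _ : G => 𝕜) p) (s : G) :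
    x ξ s = ∑ r ∈ F, x (lp.single p (r⁻¹ * s) 1) s * ξ (r⁻¹ * s) := by
  have h := (Equiv.divLeft s).symm.hasSum_iff.2 (hasSum_apply_single_one_mul hp x ξ s)
  refine h.unique (hasSum_sum_of_ne_finset_zero fun r hr => ?_)
  simp [hx s (r⁻¹ * s) (by simpa using hr)]

end lp

theorem tube_supported_operator_decomposition_general {G : Type*} [Group G]
    [DecidableEq G]
    (lam : G → (lp (fun _ : G => ℂ) 2 →L[ℂ] lp (fun _ : G => ℂ) 2))
    (hlam : ∀ (r : G) (ξ : lp (fun _ : G => ℂ) 2) (t : G), (lam r ξ) t = ξ (r⁻¹ * t))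
    (F : Finset G) (x : lp (fun _ : G => ℂ) 2 →L[ℂ] lp (fun _ : G => ℂ) 2)
    (hx : ∀ s t : G, s * t⁻¹ ∉ F →
      (inner ℂ (lp.single 2 s (1 : ℂ)) (x (lp.single 2 t (1 : ℂ))) : ℂ) = 0)
    (f : G → G → ℂ)
    (hf : ∀ r t : G, f r t =
      (inner ℂ (lp.single 2 (r * t) (1 : ℂ)) (x (lp.single 2 t (1 : ℂ))) : ℂ)) :
    (∀ r t : G, ‖f r t‖ ≤ ‖x‖) ∧
    ∃ M : G → (lp (fun _ : G => ℂ) 2 →L[ℂ] lp (fun _ : G => ℂ) 2),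
      (∀ (r : G) (ξ : lp (fun _ : G => ℂ) 2) (t : G), (M r ξ) t = f r t * ξ t) ∧
      x = ∑ r ∈ F, lam r ∘L M r := by
  simp only [lp.inner_single_one_left] at hx hf
  have hbound (r t : G) : ‖f r t‖ ≤ ‖x‖ := hf r t ▸ lp.norm_apply_single_one_le x _ t
  have hmul (r t : G) : ‖ContinuousLinearMap.mul ℂ ℂ (f r t)‖ ≤ ‖x‖ :=
    (ContinuousLinearMap.opNorm_mul_apply_le _ _ _).trans (hbound r t)
  refine ⟨hbound, fun r => lp.mapCLM 2 _ (norm_nonneg x) (hmul r), fun r ξ t => rfl, ?_⟩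
  ext ξ s
  rw [lp.apply_eq_sum_of_tube_support ENNReal.ofNat_ne_top hx]
  simp only [FunLike.coe_sum, Finset.sum_apply, lp.coeFn_sum]
  refine Finset.sum_congr rfl fun r _ => ?_
  simp [hlam, hf]

/-- An operator on `ℓ²(G)` whose matrix is supported in the tube over a finite set `F`
is a finite sum `Σ_{r ∈ F} λ(r) M_{f_r}` with `f_r(t) = x_{rt,t}` and `‖f_r‖_∞ ≤ ‖x‖`. -/
theorem tube_supported_operator_decomposition {G : Type*} [Group G] [Countable G]
    [DecidableEq G]
    (lam : G → (lp (fun _ : G => ℂ) 2 →L[ℂ] lp (fun _ : G => ℂ) 2))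
    (hlam : ∀ (r : G) (ξ : lp (fun _ : G => ℂ) 2) (t : G), (lam r ξ) t = ξ (r⁻¹ * t))
    (F : Finset G) (x : lp (fun _ : G => ℂ) 2 →L[ℂ] lp (fun _ : G => ℂ) 2)
    (hx : ∀ s t : G, s * t⁻¹ ∉ F →
      (inner ℂ (lp.single 2 s (1 : ℂ)) (x (lp.single 2 t (1 : ℂ))) : ℂ) = 0)
    (f : G → G → ℂ)
    (hf : ∀ r t : G, f r t =
      (inner ℂ (lp.single 2 (r * t) (1 : ℂ)) (x (lp.single 2 t (1 : ℂ))) : ℂ)) :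
    (∀ r t : G, ‖f r t‖ ≤ ‖x‖) ∧
    ∃ M : G → (lp (fun _ : G => ℂ) 2 →L[ℂ] lp (fun _ : G => ℂ) 2),
      (∀ (r : G) (ξ : lp (fun _ : G => ℂ) 2) (t : G), (M r ξ) t = f r t * ξ t) ∧
      x = ∑ r ∈ F, lam r ∘L M r :=
  tube_supported_operator_decomposition_general lam hlam F x hx f hf
end
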